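/- arXiv:math/0611179 — 7 statements merged into one kernel-verified Lean document; each statement's English description precedes it below -/
import Mathlib

section
/- Let p_0, p_1, p_2 > 0 be real numbers with p_0 + p_1 + p_2 = 1. Then ρ_{0,1} < ρ_{0,1/2}, i.e. the null correlation between the trend tests with scores x = 0 and x = 1 is strictly smaller than the null correlation between the trend tests with scores x = 0 and x = 1/2. -/
open Real

/-- For genotype probabilities `p₀, p₁, p₂ > 0` summing to one, the null
correlation `ρ_{0,1}` between the trend tests with scores `x = 0` and `x = 1`
is strictly smaller than the null correlation `ρ_{0,1/2}` between the trend
tests with scores `x = 0` and `x = 1/2`. -/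
theorem rho01_lt_rho0half
    (p0 p1 p2 : ℝ) (hp0 : 0 < p0) (hp1 : 0 < p1) (hp2 : 0 < p2)
    (hsum : p0 + p1 + p2 = 1) :
    p0 * p2 / (Real.sqrt (p0 * (1 - p0)) * Real.sqrt (p2 * (1 - p2))) <
      p0 * (p1 + 2 * p2) /
        (Real.sqrt (p0 * (1 - p0)) *
          Real.sqrt ((p1 + 2 * p2) * p0 + (p1 + 2 * p0) * p2)) := by
  have h0 : 0 < p0 * (1 - p0) := by nlinarith
  have hA : 0 < p2 * (1 - p2) := by nlinarith
  have hB : 0 < (p1 + 2 * p2) * p0 + (p1 + 2 * p0) * p2 := by nlinarith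
  set s0 := Real.sqrt (p0 * (1 - p0)) with hs0
  set sA := Real.sqrt (p2 * (1 - p2)) with hsA
  set sB := Real.sqrt ((p1 + 2 * p2) * p0 + (p1 + 2 * p0) * p2) with hsB
  have hs0p : 0 < s0 := Real.sqrt_pos.mpr h0
  have hsAp : 0 < sA := Real.sqrt_pos.mpr hA
  have hsBp : 0 < sB := Real.sqrt_pos.mpr hB
  have inner : (p1 + 2 * p0) * p2 ^ 2
      < (p1 + 2 * p2) * p0 * (p1 + p2) + (p1 + 2 * p2) ^ 2 * p1 := by
    nlinarith [mul_pos (mul_pos hp0 hp1) hp2, mul_pos (mul_pos hp0 hp2) hp2,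
      mul_pos (mul_pos hp1 hp2) hp2, mul_pos (mul_pos hp1 hp1) hp2]
  have key : p2 ^ 2 * ((p1 + 2 * p2) * p0 + (p1 + 2 * p0) * p2)
      < (p1 + 2 * p2) ^ 2 * (p2 * (1 - p2)) := by
    have h12 : 1 - p2 = p0 + p1 := by linarith
    rw [h12]
    nlinarith [mul_lt_mul_of_pos_left inner hp2]
  have hmain : p2 * sB < (p1 + 2 * p2) * sA := by
    have h1 : p2 * sB = Real.sqrt (p2 ^ 2 * ((p1 + 2 * p2) * p0 + (p1 + 2 * p0) * p2)) := by
      rw [Real.sqrt_mul (sq_nonneg _), Real.sqrt_sq hp2.le]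
    have h2 : (p1 + 2 * p2) * sA = Real.sqrt ((p1 + 2 * p2) ^ 2 * (p2 * (1 - p2))) := by
      rw [Real.sqrt_mul (sq_nonneg _), Real.sqrt_sq (by nlinarith)]
    rw [h1, h2]
    exact Real.sqrt_lt_sqrt (by positivity) key
  rw [div_lt_div_iff₀ (by positivity) (by positivity)]
  have : p2 * sB * (p0 * s0) < (p1 + 2 * p2) * sA * (p0 * s0) := by
    exact mul_lt_mul_of_pos_right hmain (by positivity)
  nlinarith [this]
end

section
/- Let p_0, p_1, p_2 > 0 be real numbers with p_0 + p_1 + p_2 = 1. Then ρ_{0,1} < ρ_{1/2,1}, i.e. the null correlation between the trend tests with scores x = 0 and x = 1 is strictly smaller than the null correlation between the trend tests with scores x = 1/2 and x = 1. Consequently (together with ρ_{0,1} < ρ_{0,1/2}) the pair (Z_0, Z_1) is the extreme pair of the family {Z_0, Z_{1/2}, Z_1}. -/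
open Real

/-- For genotype probabilities `p₀, p₁, p₂ > 0` summing to one, the null
correlation `ρ_{0,1}` between the trend tests with scores `x = 0` and `x = 1`
is strictly smaller than the null correlation `ρ_{1/2,1}` between the trend
tests with scores `x = 1/2` and `x = 1`; hence (together with
`ρ_{0,1} < ρ_{0,1/2}`) the pair `(Z₀, Z₁)` is the extreme pair of the family
`{Z₀, Z_{1/2}, Z₁}`. -/
theorem rho01_lt_rhohalf1
    (p0 p1 p2 : ℝ) (hp0 : 0 < p0) (hp1 : 0 < p1) (hp2 : 0 < p2)
    (hsum : p0 + p1 + p2 = 1) :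
    p0 * p2 / (Real.sqrt (p0 * (1 - p0)) * Real.sqrt (p2 * (1 - p2))) <
      p2 * (p1 + 2 * p0) /
        (Real.sqrt (p2 * (1 - p2)) *
          Real.sqrt ((p1 + 2 * p2) * p0 + (p1 + 2 * p0) * p2)) := by
  have ha : (0:ℝ) < p0 * (1 - p0) := by nlinarith
  have hc : (0:ℝ) < p2 * (1 - p2) := by nlinarith
  have hb : (0:ℝ) < (p1 + 2 * p2) * p0 + (p1 + 2 * p0) * p2 := by nlinarith
  have hsa : (0:ℝ) < Real.sqrt (p0 * (1 - p0)) := Real.sqrt_pos.mpr ha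
  have hsc : (0:ℝ) < Real.sqrt (p2 * (1 - p2)) := Real.sqrt_pos.mpr hc
  have hsb : (0:ℝ) < Real.sqrt ((p1 + 2 * p2) * p0 + (p1 + 2 * p0) * p2) :=
    Real.sqrt_pos.mpr hb
  rw [div_lt_div_iff₀ (by positivity) (by positivity)]
  -- key: p0 * sqrt b < (p1+2p0) * sqrt a
  have key : p0 * Real.sqrt ((p1 + 2 * p2) * p0 + (p1 + 2 * p0) * p2) <
      (p1 + 2 * p0) * Real.sqrt (p0 * (1 - p0)) := by
    have h1 : p0 * Real.sqrt ((p1 + 2 * p2) * p0 + (p1 + 2 * p0) * p2) =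
        Real.sqrt (p0 ^ 2 * ((p1 + 2 * p2) * p0 + (p1 + 2 * p0) * p2)) := by
      rw [Real.sqrt_mul (by positivity), Real.sqrt_sq hp0.le]
    have h2 : Real.sqrt ((p1 + 2 * p0) ^ 2 * (p0 * (1 - p0))) =
        (p1 + 2 * p0) * Real.sqrt (p0 * (1 - p0)) := by
      rw [Real.sqrt_mul (sq_nonneg _), Real.sqrt_sq (by positivity)]
    rw [h1, ← h2]
    apply Real.sqrt_lt_sqrt (by positivity)
    have h10 : (1:ℝ) - p0 = p1 + p2 := by linarith
    rw [h10]
    nlinarith [mul_pos hp0 (mul_pos (mul_pos hp1 hp1) hp1),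
      mul_pos hp0 (mul_pos (mul_pos hp1 hp1) hp2),
      mul_pos (mul_pos hp0 hp0) (mul_pos hp1 hp1),
      mul_pos (mul_pos hp0 hp0) (mul_pos hp1 hp2),
      mul_pos (mul_pos (mul_pos hp0 hp0) hp0) hp1]
  calc p0 * p2 * (Real.sqrt (p2 * (1 - p2)) *
        Real.sqrt ((p1 + 2 * p2) * p0 + (p1 + 2 * p0) * p2))
      = (p2 * Real.sqrt (p2 * (1 - p2))) *
        (p0 * Real.sqrt ((p1 + 2 * p2) * p0 + (p1 + 2 * p0) * p2)) := by ring
    _ < (p2 * Real.sqrt (p2 * (1 - p2))) *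
        ((p1 + 2 * p0) * Real.sqrt (p0 * (1 - p0))) := by
        exact mul_lt_mul_of_pos_left key (by positivity)
    _ = p2 * (p1 + 2 * p0) *
        (Real.sqrt (p0 * (1 - p0)) * Real.sqrt (p2 * (1 - p2))) := by ring
end

section
/- Let p_0, p_1, p_2 > 0 be real numbers with p_0 + p_1 + p_2 = 1. Then each of the three null correlations is strictly between 0 and 1: 0 < ρ_{0,1/2} < 1, 0 < ρ_{0,1} < 1, and 0 < ρ_{1/2,1} < 1. In particular the minimum pairwise correlation of the family of trend tests is strictly positive. -/
open Real


private lemma ratio_mem (N A B : ℝ) (hN : 0 < N) (hA : 0 < A) (hB : 0 < B)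
    (h : N ^ 2 < A * B) :
    0 < N / (Real.sqrt A * Real.sqrt B) ∧ N / (Real.sqrt A * Real.sqrt B) < 1 := by
  have hAB : 0 < A * B := mul_pos hA hB
  have hs : Real.sqrt A * Real.sqrt B = Real.sqrt (A * B) :=
    (Real.sqrt_mul hA.le B).symm
  rw [hs]
  have hsq : 0 < Real.sqrt (A * B) := Real.sqrt_pos.mpr hAB
  refine ⟨div_pos hN hsq, ?_⟩
  rw [div_lt_one hsq]
  exact (Real.lt_sqrt hN.le).mpr h

/-- For genotype probabilities `p₀, p₁, p₂ > 0` summing to one, each of the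
three null correlations `ρ_{0,1/2}`, `ρ_{0,1}`, `ρ_{1/2,1}` among the trend
tests `Z₀, Z_{1/2}, Z₁` lies strictly between 0 and 1; in particular the
minimum pairwise correlation of the family is strictly positive. -/
theorem rho_correlations_mem_Ioo
    (p0 p1 p2 : ℝ) (hp0 : 0 < p0) (hp1 : 0 < p1) (hp2 : 0 < p2)
    (hsum : p0 + p1 + p2 = 1) :
    (0 < p0 * (p1 + 2 * p2) /
        (Real.sqrt (p0 * (1 - p0)) *
          Real.sqrt ((p1 + 2 * p2) * p0 + (p1 + 2 * p0) * p2)) ∧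
      p0 * (p1 + 2 * p2) /
        (Real.sqrt (p0 * (1 - p0)) *
          Real.sqrt ((p1 + 2 * p2) * p0 + (p1 + 2 * p0) * p2)) < 1) ∧
    (0 < p0 * p2 / (Real.sqrt (p0 * (1 - p0)) * Real.sqrt (p2 * (1 - p2))) ∧
      p0 * p2 / (Real.sqrt (p0 * (1 - p0)) * Real.sqrt (p2 * (1 - p2))) < 1) ∧
    (0 < p2 * (p1 + 2 * p0) /
        (Real.sqrt (p2 * (1 - p2)) *
          Real.sqrt ((p1 + 2 * p2) * p0 + (p1 + 2 * p0) * p2)) ∧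
      p2 * (p1 + 2 * p0) /
        (Real.sqrt (p2 * (1 - p2)) *
          Real.sqrt ((p1 + 2 * p2) * p0 + (p1 + 2 * p0) * p2)) < 1) := by
  have h1p0 : 1 - p0 = p1 + p2 := by linarith
  have h1p2 : 1 - p2 = p0 + p1 := by linarith
  rw [h1p0, h1p2]
  refine ⟨ratio_mem _ _ _ (by positivity) (by positivity) (by positivity) (by nlinarith [mul_pos (mul_pos hp0 hp1) hp2, mul_pos hp0 hp1, mul_pos hp1 hp2, mul_pos hp0 hp2, sq_nonneg p1, mul_pos (mul_pos hp0 hp0) hp2, mul_pos (mul_pos hp0 hp2) hp2, mul_pos (mul_pos hp1 hp1) hp2, mul_pos (mul_pos hp0 hp1) hp1]),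
    ratio_mem _ _ _ (by positivity) (by positivity) (by positivity) (by nlinarith [mul_pos (mul_pos hp0 hp1) hp2, mul_pos hp0 hp1, mul_pos hp1 hp2, mul_pos hp0 hp2, sq_nonneg p1, mul_pos (mul_pos hp0 hp0) hp2, mul_pos (mul_pos hp0 hp2) hp2, mul_pos (mul_pos hp1 hp1) hp2, mul_pos (mul_pos hp0 hp1) hp1]),
    ratio_mem _ _ _ (by positivity) (by positivity) (by positivity) (by nlinarith [mul_pos (mul_pos hp0 hp1) hp2, mul_pos hp0 hp1, mul_pos hp1 hp2, mul_pos hp0 hp2, sq_nonneg p1, mul_pos (mul_pos hp0 hp0) hp2, mul_pos (mul_pos hp0 hp2) hp2, mul_pos (mul_pos hp1 hp1) hp2, mul_pos (mul_pos hp0 hp1) hp1])⟩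
end

section
/- Let p_0, p_1, p_2 > 0 be real numbers with p_0 + p_1 + p_2 = 1. Then the maximin-sufficiency condition ρ_{0,1/2} + ρ_{1/2,1} ≥ 1 + ρ_{0,1} holds; that is, the sum of the correlations of the intermediate trend test Z_{1/2} with the two extreme tests Z_0 and Z_1 is at least 1 plus the correlation of the extreme pair. -/
open Real

/-- For genotype probabilities `p₀, p₁, p₂ > 0` summing to one, the
maximin-sufficiency condition `ρ_{0,1/2} + ρ_{1/2,1} ≥ 1 + ρ_{0,1}` holds for
the null correlations of the trend tests `Z₀, Z_{1/2}, Z₁`. -/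
theorem mert_condition_for_trend_tests
    (p0 p1 p2 : ℝ) (hp0 : 0 < p0) (hp1 : 0 < p1) (hp2 : 0 < p2)
    (hsum : p0 + p1 + p2 = 1) :
    p0 * (p1 + 2 * p2) /
        (Real.sqrt (p0 * (1 - p0)) *
          Real.sqrt ((p1 + 2 * p2) * p0 + (p1 + 2 * p0) * p2)) +
      p2 * (p1 + 2 * p0) /
        (Real.sqrt (p2 * (1 - p2)) *
          Real.sqrt ((p1 + 2 * p2) * p0 + (p1 + 2 * p0) * p2)) ≥
    1 + p0 * p2 / (Real.sqrt (p0 * (1 - p0)) * Real.sqrt (p2 * (1 - p2))) := by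
  have h10 : 1 - p0 = p1 + p2 := by linarith
  have h12 : 1 - p2 = p0 + p1 := by linarith
  set a := Real.sqrt (p0 * (1 - p0)) with ha
  set b := Real.sqrt (p2 * (1 - p2)) with hb
  set c := Real.sqrt ((p1 + 2 * p2) * p0 + (p1 + 2 * p0) * p2) with hc
  have hA : 0 < p0 * (1 - p0) := by rw [h10]; positivity
  have hB : 0 < p2 * (1 - p2) := by rw [h12]; positivity
  have hC : 0 < (p1 + 2 * p2) * p0 + (p1 + 2 * p0) * p2 := by positivity
  have ha0 : 0 < a := Real.sqrt_pos.mpr hA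
  have hb0 : 0 < b := Real.sqrt_pos.mpr hB
  have hc0 : 0 < c := Real.sqrt_pos.mpr hC
  have ha2 : a ^ 2 = p0 * (p1 + p2) := by
    rw [ha, Real.sq_sqrt hA.le, h10]
  have hb2 : b ^ 2 = p2 * (p0 + p1) := by
    rw [hb, Real.sq_sqrt hB.le, h12]
  have hc2 : c ^ 2 = (p1 + 2 * p2) * p0 + (p1 + 2 * p0) * p2 :=
    Real.sq_sqrt hC.le
  have habt : p0 * p2 ≤ a * b := by
    rw [ha, hb, ← Real.sqrt_mul hA.le]
    calc p0 * p2 = Real.sqrt ((p0 * p2) ^ 2) := (Real.sqrt_sq (by positivity)).symm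
      _ ≤ _ := by
          apply Real.sqrt_le_sqrt
          rw [h10, h12]
          nlinarith [mul_pos hp0 hp1, mul_pos hp1 hp2, sq_nonneg p1,
            mul_pos (mul_pos hp0 hp2) hp1]
  have hcab : c ≤ a + b := by
    have hv : (p1 + 2 * p2) * p0 + (p1 + 2 * p0) * p2 ≤ (a + b) ^ 2 := by
      nlinarith [habt, ha2, hb2]
    calc c ≤ Real.sqrt ((a + b) ^ 2) := Real.sqrt_le_sqrt hv
      _ = a + b := Real.sqrt_sq (by positivity)
  have hac : (a * c) ≠ 0 := by positivity
  have hbc : (b * c) ≠ 0 := by positivity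
  rw [ge_iff_le, div_add_div _ _ hac hbc,
    show (1 : ℝ) + p0 * p2 / (a * b) = (a * b + p0 * p2) / (a * b) by
      field_simp,
    div_le_div_iff₀ (by positivity) (by positivity)]
  have key : 0 ≤ a * b * c * ((a * b + p0 * p2) * (a + b - c)) := by
    apply mul_nonneg (by positivity)
    apply mul_nonneg (by nlinarith) (by linarith)
  have hx : p0 * (p1 + 2 * p2) = a ^ 2 + p0 * p2 := by rw [ha2]; ring
  have hy : p2 * (p1 + 2 * p0) = b ^ 2 + p0 * p2 := by rw [hb2]; ring
  rw [hx, hy]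
  nlinarith [key]
end

section
/- Let E be a real inner product space and let v, w ∈ E be unit vectors with ⟨v, w⟩ = ρ > −1. Then for every unit vector u ∈ E, min(⟨u, v⟩, ⟨u, w⟩) ≤ sqrt((1+ρ)/2), and equality holds if and only if u = (v + w)/‖v + w‖. In other words, the normalized average of the two vectors is the unique unit vector maximizing the minimum inner product with v and w. -/
open scoped RealInnerProductSpace

/-- If `v, w` are unit vectors in a real inner product space with
`⟪v, w⟫ = ρ > −1`, then every unit vector `u` satisfies
`min(⟪u,v⟫, ⟪u,w⟫) ≤ √((1+ρ)/2)`, with equality iff `u` is the normalized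
average `(v + w)/‖v + w‖`. -/
theorem mert_two_vectors {E : Type*} [NormedAddCommGroup E]
    [InnerProductSpace ℝ E] (v w : E) (ρ : ℝ)
    (hv : ‖v‖ = 1) (hw : ‖w‖ = 1) (hvw : ⟪v, w⟫ = ρ) (hρ : -1 < ρ) :
    ∀ u : E, ‖u‖ = 1 →
      min ⟪u, v⟫ ⟪u, w⟫ ≤ Real.sqrt ((1 + ρ) / 2) ∧
      (min ⟪u, v⟫ ⟪u, w⟫ = Real.sqrt ((1 + ρ) / 2) ↔
        u = ‖v + w‖⁻¹ • (v + w)) := by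
  intro u hu
  set s := v + w with hs
  have hns : ‖s‖ ^ 2 = 2 + 2 * ρ := by
    rw [hs, norm_add_sq_real, hv, hw, hvw]; ring
  have hnspos : 0 < ‖s‖ := by
    rcases (norm_nonneg s).lt_or_eq with h | h
    · exact h
    · exfalso; rw [← h] at hns; nlinarith
  have hkey : Real.sqrt ((1 + ρ) / 2) = ‖s‖ / 2 := by
    rw [show (1 + ρ) / 2 = (‖s‖ / 2) ^ 2 by rw [div_pow, hns]; ring,
      Real.sqrt_sq (by positivity)]
  have hsum : ⟪u, s⟫ = ⟪u, v⟫ + ⟪u, w⟫ := inner_add_right u v w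
  have hCS : ⟪u, s⟫ ≤ ‖s‖ := by
    calc ⟪u, s⟫ ≤ ‖u‖ * ‖s‖ := real_inner_le_norm u s
    _ = ‖s‖ := by rw [hu, one_mul]
  have h1 := min_le_left ⟪u, v⟫ ⟪u, w⟫
  have h2 := min_le_right ⟪u, v⟫ ⟪u, w⟫
  have hmin : min ⟪u, v⟫ ⟪u, w⟫ ≤ ‖s‖ / 2 := by linarith
  refine ⟨hkey ▸ hmin, ?_, ?_⟩
  · intro heq
    rw [hkey] at heq
    have hinner : ⟪u, s⟫ = ‖u‖ * ‖s‖ := by rw [hu, one_mul]; linarith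
    have h3 := (inner_eq_norm_mul_iff_real).mp hinner
    rw [hu, one_smul] at h3
    have : u = ‖s‖⁻¹ • (‖s‖ • u) := by
      rw [smul_smul, inv_mul_cancel₀ hnspos.ne', one_smul]
    rw [this, h3]
  · intro heq
    have hsv : ⟪s, v⟫ = 1 + ρ := by
      rw [hs, inner_add_left, real_inner_self_eq_norm_sq, hv,
        real_inner_comm, hvw]; ring
    have hsw : ⟪s, w⟫ = 1 + ρ := by
      rw [hs, inner_add_left, real_inner_self_eq_norm_sq, hw, hvw]; ring
    have huv : ⟪u, v⟫ = ‖s‖⁻¹ * (1 + ρ) := by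
      rw [heq, real_inner_smul_left, hsv]
    have huw : ⟪u, w⟫ = ‖s‖⁻¹ * (1 + ρ) := by
      rw [heq, real_inner_smul_left, hsw]
    rw [huv, huw, min_self, hkey]
    field_simp
    nlinarith [hns]
end

section
/- Let E be a real inner product space and let v_1, …, v_k ∈ E be unit vectors such that ⟨v_i, v_j⟩ ≥ ε for all i, j and some ε > 0. Then there exists a unique unit vector u ∈ E maximizing min_{1 ≤ i ≤ k} ⟨u, v_i⟩ over all unit vectors, and this maximizer u lies in the convex cone generated by v_1, …, v_k, i.e. u = (Σ λ_i v_i)/‖Σ λ_i v_i‖ for some nonnegative weights λ_1, …, λ_k not all zero (equivalently, u is a normalized convex combination of the v_i). -/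
/-!
Let `p` be the point of least norm in the convex hull `K` of the `vᵢ`; the correlation bound
gives `ε ≤ ⟪p, p⟫`, so `p ≠ 0`. Since `p` is a convex combination of the `vᵢ`, every unit `w`
satisfies `minᵢ ⟪w, vᵢ⟫ ≤ ⟪w, p⟫ ≤ ‖p‖`, while the variational inequality `‖p‖² ≤ ⟪p, c⟫`
(`c ∈ K`) of the least-norm point shows that `p / ‖p‖` attains `‖p‖`. A unit `u` attaining `‖p‖`
has `‖p‖ ≤ ⟪u, p⟫`, which is equality in Cauchy–Schwarz, so `u = p / ‖p‖`.
-/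

open scoped RealInnerProductSpace

/-- The minimum inner product of `w` with the members of a finite family of
vectors `v : Fin k → E` (for `k > 0`). -/
noncomputable def minInner {E : Type*} [NormedAddCommGroup E]
    [InnerProductSpace ℝ E] {k : ℕ} (hk : 0 < k) (v : Fin k → E) (w : E) : ℝ :=
  Finset.univ.inf' (Finset.univ_nonempty_iff.mpr (Fin.pos_iff_nonempty.mp hk))
    fun i => ⟪w, v i⟫

open Set

theorem convexHull_range_eq_image_stdSimplex {R M ι : Type*} [Field R] [LinearOrder R]
    [IsStrictOrderedRing R] [AddCommGroup M] [Module R M] [Fintype ι] (v : ι → M) :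
    convexHull R (range v) = Fintype.linearCombination R v '' stdSimplex R ι := by
  classical
  rw [← convexHull_rangle_single_eq_stdSimplex, LinearMap.image_convexHull, ← range_comp]
  congr 1
  ext i
  simp [Fintype.linearCombination_apply_single]

section InnerProductSpace

variable {E : Type*} [NormedAddCommGroup E] [InnerProductSpace ℝ E]

theorem le_inner_of_mem_convexHull {s : Set E} {w p : E} {a : ℝ}
    (hs : ∀ x ∈ s, a ≤ ⟪w, x⟫) (hp : p ∈ convexHull ℝ s) : a ≤ ⟪w, p⟫ :=
  convexHull_min hs (convex_halfSpace_ge (innerₛₗ ℝ w).isLinear a) hp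

theorem le_inner_self_of_mem_convexHull {s : Set E} {p : E} {a : ℝ}
    (hs : ∀ x ∈ s, ∀ y ∈ s, a ≤ ⟪x, y⟫) (hp : p ∈ convexHull ℝ s) : a ≤ ⟪p, p⟫ := by
  have hsp : ∀ y ∈ s, a ≤ ⟪p, y⟫ := fun y hy =>
    real_inner_comm p y ▸ le_inner_of_mem_convexHull (hs y hy) hp
  exact le_inner_of_mem_convexHull hsp hp

theorem le_norm_of_mem_convexHull {s : Set E} {w p : E} {a : ℝ} (hw : ‖w‖ ≤ 1)
    (hs : ∀ x ∈ s, a ≤ ⟪w, x⟫) (hp : p ∈ convexHull ℝ s) : a ≤ ‖p‖ :=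
  calc a ≤ ⟪w, p⟫ := le_inner_of_mem_convexHull hs hp
    _ ≤ ‖w‖ * ‖p‖ := real_inner_le_norm w p
    _ ≤ ‖p‖ := mul_le_of_le_one_left (norm_nonneg p) hw

theorem norm_sq_le_inner_of_isMinOn_norm {K : Set E} (hK : Convex ℝ K) {p c : E} (hp : p ∈ K)
    (hmin : IsMinOn (‖·‖) K p) (hc : c ∈ K) : ‖p‖ ^ 2 ≤ ⟪p, c⟫ := by
  have : Nonempty K := ⟨⟨p, hp⟩⟩
  -- `p` is the projection of `0` onto `K`
  have hinf : ‖0 - p‖ = ⨅ x : K, ‖0 - (x : E)‖ := by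
    simp only [zero_sub, norm_neg]
    refine le_antisymm (le_ciInf fun x => hmin x.2) (ciInf_le ?_ (⟨p, hp⟩ : K))
    exact ⟨0, by rintro _ ⟨x, rfl⟩; positivity⟩
  have hvar := (norm_eq_iInf_iff_real_inner_le_zero hK hp).1 hinf c hc
  rw [zero_sub, inner_neg_left, inner_sub_right, real_inner_self_eq_norm_sq] at hvar
  linarith

theorem norm_le_inner_inv_norm_smul_of_isMinOn_norm {K : Set E} (hK : Convex ℝ K) {p c : E}
    (hp : p ∈ K) (hmin : IsMinOn (‖·‖) K p) (hc : c ∈ K) : ‖p‖ ≤ ⟪‖p‖⁻¹ • p, c⟫ := by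
  have hnorm : ‖p‖ = ‖p‖⁻¹ * ‖p‖ ^ 2 := by rw [sq, ← mul_assoc, inv_mul_mul_self]
  rw [real_inner_smul_left]
  nth_rw 1 [hnorm]
  exact mul_le_mul_of_nonneg_left (norm_sq_le_inner_of_isMinOn_norm hK hp hmin hc)
    (inv_nonneg.2 (norm_nonneg p))

theorem eq_inv_norm_smul_of_norm_le_inner {s : Set E} {p u : E} (hp : p ∈ convexHull ℝ s)
    (hp0 : p ≠ 0) (hu : ‖u‖ = 1) (hs : ∀ x ∈ s, ‖p‖ ≤ ⟪u, x⟫) : u = ‖p‖⁻¹ • p := by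
  have hnorm : ‖‖p‖⁻¹ • p‖ = 1 := norm_smul_inv_norm hp0
  refine (inner_eq_one_iff_of_norm_eq_one hu hnorm).1 (le_antisymm (α := ℝ) ?_ ?_)
  · simpa [hu, hnorm] using real_inner_le_norm u (‖p‖⁻¹ • p)
  · rw [real_inner_smul_right, ← inv_mul_cancel₀ (norm_ne_zero_iff.2 hp0)]
    exact mul_le_mul_of_nonneg_left (le_inner_of_mem_convexHull hs hp)
      (inv_nonneg.2 (norm_nonneg p))

end InnerProductSpace

section minInner

variable {E : Type*} [NormedAddCommGroup E] [InnerProductSpace ℝ E] {k : ℕ} (hk : 0 < k)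
  (v : Fin k → E)

theorem le_minInner_iff {w : E} {a : ℝ} : a ≤ minInner hk v w ↔ ∀ i, a ≤ ⟪w, v i⟫ := by
  simp [minInner]

theorem minInner_le (w : E) (i : Fin k) : minInner hk v w ≤ ⟪w, v i⟫ :=
  Finset.inf'_le _ (Finset.mem_univ i)

end minInner

theorem mert_exists_unique_convex_combination_general {E : Type*} [NormedAddCommGroup E]
    [InnerProductSpace ℝ E] {k : ℕ} (hk : 0 < k) (v : Fin k → E)
    (ε : ℝ) (hε : 0 < ε)
    (hcorr : ∀ i j, ε ≤ ⟪v i, v j⟫) :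
    (∃! u : E, ‖u‖ = 1 ∧
        ∀ w : E, ‖w‖ = 1 → minInner hk v w ≤ minInner hk v u) ∧
    ∀ u : E, (‖u‖ = 1 ∧
        ∀ w : E, ‖w‖ = 1 → minInner hk v w ≤ minInner hk v u) →
      ∃ lam : Fin k → ℝ, (∀ i, 0 ≤ lam i) ∧ (∃ i, lam i ≠ 0) ∧
        u = ‖∑ i, lam i • v i‖⁻¹ • ∑ i, lam i • v i := by
  have hK : (convexHull ℝ (range v)).Nonempty :=
    (range_nonempty_iff_nonempty.2 ⟨⟨0, hk⟩⟩).convexHull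
  obtain ⟨p, hpK, hmin⟩ :=
    ((finite_range v).isCompact_convexHull ℝ).exists_isMinOn hK continuous_norm.continuousOn
  have hpp : ε ≤ ⟪p, p⟫ := le_inner_self_of_mem_convexHull (s := range v)
    (by rintro _ ⟨i, rfl⟩ _ ⟨j, rfl⟩; exact hcorr i j) hpK
  have hp0 : p ≠ 0 := inner_self_ne_zero.1 (hε.trans_le hpp).ne'
  have hu : ‖‖p‖⁻¹ • p‖ = 1 := norm_smul_inv_norm hp0
  have hle_max : ‖p‖ ≤ minInner hk v (‖p‖⁻¹ • p) := (le_minInner_iff hk v).2 fun i =>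
    norm_le_inner_inv_norm_smul_of_isMinOn_norm (convex_convexHull ℝ _) hpK hmin
      (subset_convexHull ℝ _ (mem_range_self i))
  have hmax_le : ∀ w : E, ‖w‖ = 1 → minInner hk v w ≤ ‖p‖ := fun w hw =>
    le_norm_of_mem_convexHull (s := range v) hw.le
      (by rintro _ ⟨i, rfl⟩; exact minInner_le hk v w i) hpK
  have huniq : ∀ u : E, ‖u‖ = 1 → (∀ w : E, ‖w‖ = 1 → minInner hk v w ≤ minInner hk v u) →
      u = ‖p‖⁻¹ • p := fun u hu1 hmax =>
    eq_inv_norm_smul_of_norm_le_inner hpK hp0 hu1 <| by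
      rintro _ ⟨i, rfl⟩
      exact (hle_max.trans (hmax _ hu)).trans (minInner_le hk v u i)
  refine ⟨⟨‖p‖⁻¹ • p, ⟨hu, fun w hw => (hmax_le w hw).trans hle_max⟩,
    fun u h => huniq u h.1 h.2⟩, fun u h => ?_⟩
  rw [convexHull_range_eq_image_stdSimplex] at hpK
  obtain ⟨lam, ⟨hlam0, hlam1⟩, rfl⟩ := hpK
  refine ⟨lam, hlam0, ?_, by rw [huniq u h.1 h.2, Fintype.linearCombination_apply]⟩
  obtain ⟨i, -, hi⟩ := Finset.exists_ne_zero_of_sum_ne_zero (hlam1 ▸ one_ne_zero)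
  exact ⟨i, hi⟩

/-- Gastwirth's theorem: if `v₁, …, v_k` are unit vectors whose pairwise inner
products are bounded below by some `ε > 0`, then there is a unique unit vector
maximizing the minimum inner product with the family, and this maximizer is a
normalized nonnegative (convex-cone) combination of the `vᵢ`. -/
theorem mert_exists_unique_convex_combination {E : Type*} [NormedAddCommGroup E]
    [InnerProductSpace ℝ E] {k : ℕ} (hk : 0 < k) (v : Fin k → E)
    (hv : ∀ i, ‖v i‖ = 1) (ε : ℝ) (hε : 0 < ε)
    (hcorr : ∀ i j, ε ≤ ⟪v i, v j⟫) :
    (∃! u : E, ‖u‖ = 1 ∧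
        ∀ w : E, ‖w‖ = 1 → minInner hk v w ≤ minInner hk v u) ∧
    ∀ u : E, (‖u‖ = 1 ∧
        ∀ w : E, ‖w‖ = 1 → minInner hk v w ≤ minInner hk v u) →
      ∃ lam : Fin k → ℝ, (∀ i, 0 ≤ lam i) ∧ (∃ i, lam i ≠ 0) ∧
        u = ‖∑ i, lam i • v i‖⁻¹ • ∑ i, lam i • v i :=
  mert_exists_unique_convex_combination_general hk v ε hε hcorr
end

section
/- Let E be a real inner product space and let v_1, …, v_k ∈ E be unit vectors with pairwise inner products ρ_{ij} = ⟨v_i, v_j⟩ ≥ ε > 0, let (v_s, v_t) attain ρ_{st} = min_{i,j} ρ_{ij}, and suppose ρ_{si} + ρ_{it} ≥ 1 + ρ_{st} for all i. Then u = (v_s + v_t)/‖v_s + v_t‖ satisfies min_{1 ≤ i ≤ k} ⟨u, v_i⟩ = sqrt((1+ρ_{st})/2); hence the minimum squared correlation (the minimum asymptotic relative efficiency of the MERT relative to each optimal test in the family) equals (1+ρ_{st})/2. -/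
open scoped RealInnerProductSpace

/-- Let `v₁, …, v_k` be unit vectors with pairwise inner products `ρ_{ij} ≥ ε > 0`,
let `(v_s, v_t)` attain the minimum pairwise inner product `ρ_{st}`, and suppose
`ρ_{si} + ρ_{it} ≥ 1 + ρ_{st}` for all `i`. Then the normalized average
`u = (v_s + v_t)/‖v_s + v_t‖` satisfies
`min_i ⟪u, v_i⟫ = √((1 + ρ_{st})/2)`; hence the minimum asymptotic relative
efficiency of the MERT relative to each optimal test equals `(1 + ρ_{st})/2`. -/
theorem mert_min_inner_eq {E : Type*} [NormedAddCommGroup E]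
    [InnerProductSpace ℝ E] {k : ℕ} (hk : 0 < k) (v : Fin k → E)
    (hv : ∀ i, ‖v i‖ = 1) (ε : ℝ) (hε : 0 < ε)
    (hcorr : ∀ i j, ε ≤ ⟪v i, v j⟫) (s t : Fin k)
    (hmin : ∀ i j, ⟪v s, v t⟫ ≤ ⟪v i, v j⟫)
    (hcond : ∀ i, ⟪v s, v i⟫ + ⟪v i, v t⟫ ≥ 1 + ⟪v s, v t⟫) :
    minInner hk v (‖v s + v t‖⁻¹ • (v s + v t)) =
      Real.sqrt ((1 + ⟪v s, v t⟫) / 2) := by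
  set ρ : ℝ := ⟪v s, v t⟫ with hρ
  have hρpos : 0 < ρ := lt_of_lt_of_le hε (hcorr s t)
  have hNsq : ‖v s + v t‖ ^ 2 = 2 + 2 * ρ := by
    rw [norm_add_sq_real, hv s, hv t]; ring
  have h2pos : (0:ℝ) < 2 + 2 * ρ := by linarith
  have hNval : ‖v s + v t‖ = Real.sqrt (2 + 2 * ρ) := by
    rw [← hNsq, Real.sqrt_sq (norm_nonneg _)]
  have hNpos : 0 < ‖v s + v t‖ := by
    rw [hNval]; exact Real.sqrt_pos.mpr h2pos
  have hmul : Real.sqrt ((1 + ρ) / 2) * ‖v s + v t‖ = 1 + ρ := by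
    rw [hNval, ← Real.sqrt_mul (by positivity)]
    have h : (1 + ρ) / 2 * (2 + 2 * ρ) = (1 + ρ) ^ 2 := by ring
    rw [h, Real.sqrt_sq (by linarith)]
  have hc : ‖v s + v t‖⁻¹ * (1 + ρ) = Real.sqrt ((1 + ρ) / 2) := by
    rw [inv_mul_eq_div, div_eq_iff hNpos.ne']
    exact hmul.symm
  have hinner : ∀ i, ⟪‖v s + v t‖⁻¹ • (v s + v t), v i⟫ =
      ‖v s + v t‖⁻¹ * (⟪v s, v i⟫ + ⟪v t, v i⟫) := by
    intro i
    rw [real_inner_smul_left, inner_add_left]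
  apply le_antisymm
  · apply Finset.inf'_le_of_le _ (Finset.mem_univ s)
    rw [hinner s, real_inner_self_eq_norm_sq, hv s]
    have hts : ⟪v t, v s⟫ = ρ := real_inner_comm _ _
    rw [hts, ← hc]
    norm_num
  · apply Finset.le_inf'
    intro i _
    rw [hinner i, ← hc]
    have h1 : ⟪v s, v i⟫ + ⟪v i, v t⟫ ≥ 1 + ρ := hcond i
    rw [real_inner_comm (v t) (v i)] at *
    have := inv_pos.mpr hNpos
    nlinarith [hcond i, real_inner_comm (v i) (v t)]
end
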